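/- Consider a two-hidden-layer network: widths m₀ = n, m₁, m₂, weights W¹ ∈ ℝ^{m₁×n}, W² ∈ ℝ^{m₂×m₁}, biases b¹ ∈ ℝ^{m₁}, b² ∈ ℝ^{m₂}, scalar activations φ¹, φ² incrementally sector bounded on ℝ by [α¹, β¹] and [α², β²] respectively, applied componentwise as Φ¹, Φ², and matrices A ∈ ℝ^{n×n}, g ∈ ℝ^{n×l}, Y ∈ ℝ^{l×n}, W_min ∈ ℝ^{n×m₂}, c ∈ ℝⁿ. Let λ̲ be the minimum eigenvalue of α¹β¹·W¹ᵀW¹ and assume λ̲ ≥ 0. Suppose there exist a symmetric positive definite S ∈ ℝ^{n×n} and constants 0 < s̲ ≤ s̄, μ > 0 with s̲·I ⪯ S ⪯ s̄·I such that, with R̄ = AS + SAᵀ + gY + Yᵀgᵀ − 2·s̲·λ̲·S, the symmetric block matrix [[−μ·Iₙ, S, 0, 0], [S, R̄, (α¹+β¹)·S·W¹ᵀ, W_min], [0, (α¹+β¹)·W¹·S, −2·α²β²·W²ᵀW² − 2·I_{m₁}, (α²+β²)·W²ᵀ], [0, W_minᵀ, (α²+β²)·W², −2·I_{m₂}]]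 ⪯ 0. Then, setting H = Y·S⁻¹, any two differentiable functions x₁, x₂ : [0,∞) → ℝⁿ satisfying ẋ(t) = (A + gH)·x(t) + W_min·Φ²(W²·Φ¹(W¹·x(t) + b¹) + b²) + c for all t ≥ 0 satisfy ‖x₁(t) − x₂(t)‖ ≤ √(s̄/s̲)·e^{−(s̲/(2μ))·t}·‖x₁(0) − x₂(0)‖ for all t ≥ 0. -/

import Mathlib

open Matrix

/-- The Euclidean norm of a vector in `ℝⁿ`. -/
noncomputable def eNorm {n : ℕ} (v : Fin n → ℝ) : ℝ := Real.sqrt (v ⬝ᵥ v)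

/-!
The error `e = x₁ - x₂` is measured by the Lyapunov function `V = eᵀ S⁻¹ e`, which is comparable
to `‖e‖²` because `s₁ I ⪯ S ⪯ s₂ I`. Writing `z = S⁻¹ e` and `Δv`, `Δw` for the increments of the
two hidden layers, `V̇ = 2 zᵀ (A S z + g Y z + W_min Δw)`. Evaluating the LMI at
`(μ⁻¹ e, z, Δv, Δw)` and adding twice the two incremental sector inequalities and the spectral
bound `λ̲ ‖e‖² ≤ α¹β¹ ‖W¹ e‖²` gives `V̇ ≤ -(s₁ / μ) V`, so `V` decays exponentially by Grönwall.
-/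

section QuadraticForms

variable {ι : Type*} [Fintype ι]

lemma dotProduct_self_nonneg (v : ι → ℝ) : 0 ≤ v ⬝ᵥ v := by
  simpa only [star_trivial] using dotProduct_star_self_nonneg v

lemma dotProduct_mulVec_nonpos_of_posSemidef_neg {M : Matrix ι ι ℝ} (h : (-M).PosSemidef)
    (x : ι → ℝ) : x ⬝ᵥ M *ᵥ x ≤ 0 := by
  simpa only [star_trivial, neg_mulVec, dotProduct_neg, neg_nonneg] using
    h.dotProduct_mulVec_nonneg x

variable [DecidableEq ι]

lemma Matrix.PosSemidef.dotProduct_mulVec_mul_le {S : Matrix ι ι ℝ} (hS : S.PosSemidef)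
    (x y : ι → ℝ) : (x ⬝ᵥ S *ᵥ y) * (y ⬝ᵥ S *ᵥ x) ≤ (x ⬝ᵥ S *ᵥ x) * (y ⬝ᵥ S *ᵥ y) := by
  simpa only [toLinearMap₂'_apply'] using
    LinearMap.BilinForm.apply_mul_apply_le_of_forall_zero_le (toLinearMap₂' ℝ S)
      (fun v => by simpa only [toLinearMap₂'_apply', star_trivial] using
        hS.dotProduct_mulVec_nonneg v) x y

lemma Matrix.PosSemidef.mul_dotProduct_le_dotProduct_mulVec {S : Matrix ι ι ℝ} {s : ℝ}
    (h : (S - s • 1).PosSemidef) (z : ι → ℝ) : s * (z ⬝ᵥ z) ≤ z ⬝ᵥ S *ᵥ z := by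
  simpa only [star_trivial, sub_mulVec, smul_mulVec, one_mulVec, dotProduct_sub, dotProduct_smul,
    smul_eq_mul, sub_nonneg] using h.dotProduct_mulVec_nonneg z

lemma Matrix.PosSemidef.dotProduct_mulVec_le_mul_dotProduct {S : Matrix ι ι ℝ} {s : ℝ}
    (h : (s • 1 - S).PosSemidef) (z : ι → ℝ) : z ⬝ᵥ S *ᵥ z ≤ s * (z ⬝ᵥ z) := by
  simpa only [star_trivial, sub_mulVec, smul_mulVec, one_mulVec, dotProduct_sub, dotProduct_smul,
    smul_eq_mul, sub_nonneg] using h.dotProduct_mulVec_nonneg z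

lemma mul_dotProduct_mulVec_le_of_posSemidef_sub {S : Matrix ι ι ℝ} {s : ℝ} (hs : 0 ≤ s)
    (hlo : (S - s • 1).PosSemidef) (z : ι → ℝ) :
    s * (z ⬝ᵥ S *ᵥ z) ≤ S *ᵥ z ⬝ᵥ S *ᵥ z := by
  have hz := hlo.mul_dotProduct_le_dotProduct_mulVec z
  have hcs := PosSemidef.one.dotProduct_mulVec_mul_le z (S *ᵥ z)
  simp only [one_mulVec, dotProduct_comm (S *ᵥ z) z] at hcs
  have hw := dotProduct_self_nonneg (S *ᵥ z)
  have key : (z ⬝ᵥ S *ᵥ z) * (s * (z ⬝ᵥ S *ᵥ z)) ≤ (z ⬝ᵥ S *ᵥ z) * (S *ᵥ z ⬝ᵥ S *ᵥ z) := by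
    nlinarith [mul_le_mul_of_nonneg_right hz hw, mul_le_mul_of_nonneg_left hcs hs]
  rcases ((mul_nonneg hs (dotProduct_self_nonneg z)).trans hz).eq_or_lt with hq | hq
  · rw [← hq, mul_zero]
    exact hw
  · exact le_of_mul_le_mul_left key hq

lemma dotProduct_mulVec_le_mul_of_posSemidef_sub {S : Matrix ι ι ℝ} {s : ℝ}
    (hS : S.PosSemidef) (hhi : (s • 1 - S).PosSemidef) (z : ι → ℝ) :
    S *ᵥ z ⬝ᵥ S *ᵥ z ≤ s * (z ⬝ᵥ S *ᵥ z) := by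
  have hSt : Sᵀ = S := (isHermitian_iff_isSymm.mp hS.1).eq
  have hsym : z ⬝ᵥ S *ᵥ S *ᵥ z = S *ᵥ z ⬝ᵥ S *ᵥ z := by
    nth_rewrite 1 [← hSt]
    rw [dotProduct_transpose_mulVec]
  have hcs := hS.dotProduct_mulVec_mul_le z (S *ᵥ z)
  rw [hsym] at hcs
  have hSz := hhi.dotProduct_mulVec_le_mul_dotProduct (S *ᵥ z)
  rcases (dotProduct_self_nonneg (S *ᵥ z)).eq_or_lt with hw | hw
  · rw [← hw, dotProduct_self_eq_zero.mp hw.symm, dotProduct_zero, mul_zero]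
  · have hq : 0 ≤ z ⬝ᵥ S *ᵥ z := by simpa only [star_trivial] using hS.dotProduct_mulVec_nonneg z
    nlinarith [mul_le_mul_of_nonneg_left hSz hq]

open scoped MatrixOrder in
lemma Matrix.IsHermitian.mul_dotProduct_self_le {M : Matrix ι ι ℝ} (hM : M.IsHermitian)
    {lam : ℝ} (h : ∀ i, lam ≤ hM.eigenvalues i) (x : ι → ℝ) : lam * (x ⬝ᵥ x) ≤ x ⬝ᵥ M *ᵥ x := by
  have hle : algebraMap ℝ (Matrix ι ι ℝ) lam ≤ M :=
    algebraMap_le_of_le_spectrum (by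
      rw [hM.spectrum_real_eq_range_eigenvalues]
      rintro _ ⟨i, rfl⟩
      exact h i) hM
  simpa only [Algebra.algebraMap_eq_smul_one, star_trivial, sub_mulVec, smul_mulVec, one_mulVec,
    dotProduct_sub, dotProduct_smul, smul_eq_mul, sub_nonneg] using
    (Matrix.le_iff.mp hle).dotProduct_mulVec_nonneg x

lemma mul_dotProduct_inv_mulVec_le {S : Matrix ι ι ℝ} (hS : IsUnit S.det) {s : ℝ} (hs : 0 ≤ s)
    (hlo : (S - s • 1).PosSemidef) (v : ι → ℝ) : s * (v ⬝ᵥ S⁻¹ *ᵥ v) ≤ v ⬝ᵥ v := by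
  have hv : S *ᵥ S⁻¹ *ᵥ v = v := by rw [mulVec_mulVec, mul_nonsing_inv S hS, one_mulVec]
  simpa only [hv, dotProduct_comm (S⁻¹ *ᵥ v)] using
    mul_dotProduct_mulVec_le_of_posSemidef_sub hs hlo (S⁻¹ *ᵥ v)

lemma dotProduct_le_mul_dotProduct_inv_mulVec {S : Matrix ι ι ℝ} (hS : S.PosDef) {s : ℝ}
    (hhi : (s • 1 - S).PosSemidef) (v : ι → ℝ) : v ⬝ᵥ v ≤ s * (v ⬝ᵥ S⁻¹ *ᵥ v) := by
  have hv : S *ᵥ S⁻¹ *ᵥ v = v := by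
    rw [mulVec_mulVec, mul_nonsing_inv S ((isUnit_iff_isUnit_det S).mp hS.isUnit), one_mulVec]
  simpa only [hv, dotProduct_comm (S⁻¹ *ᵥ v)] using
    dotProduct_mulVec_le_mul_of_posSemidef_sub hS.posSemidef hhi (S⁻¹ *ᵥ v)

end QuadraticForms

lemma HasDerivAt.dotProduct {ι : Type*} [Fintype ι] {u v : ℝ → ι → ℝ} {u' v' : ι → ℝ} {t : ℝ}
    (hu : HasDerivAt u u' t) (hv : HasDerivAt v v' t) :
    HasDerivAt (fun s => u s ⬝ᵥ v s) (u' ⬝ᵥ v t + u t ⬝ᵥ v') t :=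
  (HasDerivAt.fun_sum fun i _ =>
    (hasDerivAt_pi.mp hu i).fun_mul (hasDerivAt_pi.mp hv i)).congr_deriv Finset.sum_add_distrib

lemma HasDerivAt.mulVec {ι κ : Type*} [Fintype κ] {u : ℝ → κ → ℝ} {u' : κ → ℝ} {t : ℝ}
    (M : Matrix ι κ ℝ) (hu : HasDerivAt u u' t) :
    HasDerivAt (fun s => M *ᵥ u s) (M *ᵥ u') t :=
  hasDerivAt_pi.mpr fun i => HasDerivAt.fun_sum fun j _ => (hasDerivAt_pi.mp hu j).const_mul (M i j)

lemma le_mul_exp_of_hasDerivAt_le_neg_mul {V V' : ℝ → ℝ} {K : ℝ}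
    (hV : ∀ t, 0 ≤ t → HasDerivAt V (V' t) t) (hle : ∀ t, 0 ≤ t → V' t ≤ -K * V t)
    {t : ℝ} (ht : 0 ≤ t) : V t ≤ V 0 * Real.exp (-K * t) := by
  have := le_gronwallBound_of_liminf_deriv_right_le (f := V) (f' := V') (K := -K) (ε := 0)
    (fun s hs => (hV s hs.1).continuousAt.continuousWithinAt)
    (fun s hs _ hr => (hV s hs.1).hasDerivWithinAt.liminf_right_slope_le hr) le_rfl
    (fun s hs => (hle s hs.1).trans_eq (add_zero _).symm) t ⟨ht, le_rfl⟩
  simpa only [gronwallBound_ε0, sub_zero] using this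

theorem eNorm_sub_le_of_contracting {n : ℕ} {f : (Fin n → ℝ) → Fin n → ℝ}
    {P : Matrix (Fin n) (Fin n) ℝ} (hP : P.IsSymm) {s₁ s₂ ρ : ℝ} (hs₁ : 0 < s₁) (hs₂ : 0 ≤ s₂)
    (hPlo : ∀ v, s₁ * (v ⬝ᵥ P *ᵥ v) ≤ v ⬝ᵥ v) (hPhi : ∀ v, v ⬝ᵥ v ≤ s₂ * (v ⬝ᵥ P *ᵥ v))
    (hf : ∀ x y, 2 * (P *ᵥ (x - y) ⬝ᵥ (f x - f y)) ≤ -(2 * ρ) * ((x - y) ⬝ᵥ P *ᵥ (x - y)))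
    {x₁ x₂ : ℝ → Fin n → ℝ} (hx₁ : ∀ t, 0 ≤ t → HasDerivAt x₁ (f (x₁ t)) t)
    (hx₂ : ∀ t, 0 ≤ t → HasDerivAt x₂ (f (x₂ t)) t) {t : ℝ} (ht : 0 ≤ t) :
    eNorm (x₁ t - x₂ t) ≤ Real.sqrt (s₂ / s₁) * Real.exp (-ρ * t) * eNorm (x₁ 0 - x₂ 0) := by
  set e := fun t => x₁ t - x₂ t
  have hV : ∀ t, 0 ≤ t → HasDerivAt (fun t => e t ⬝ᵥ P *ᵥ e t)
      (2 * (P *ᵥ e t ⬝ᵥ (f (x₁ t) - f (x₂ t)))) t := fun t ht => by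
    have he := (hx₁ t ht).sub (hx₂ t ht)
    refine (he.dotProduct (he.mulVec P)).congr_deriv ?_
    rw [dotProduct_comm, ← dotProduct_transpose_mulVec, hP.eq, dotProduct_comm (f _ - f _),
      two_mul]
    rfl
  have hdecay := le_mul_exp_of_hasDerivAt_le_neg_mul hV (fun t _ => hf _ _) ht
  have hsq : e t ⬝ᵥ e t ≤ (s₂ / s₁) * Real.exp (-ρ * t) ^ 2 * (e 0 ⬝ᵥ e 0) := by
    have hexp : Real.exp (-ρ * t) ^ 2 = Real.exp (-(2 * ρ) * t) := by
      rw [← Real.exp_nat_mul]; ring_nf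
    calc e t ⬝ᵥ e t ≤ s₂ * (e t ⬝ᵥ P *ᵥ e t) := hPhi (e t)
      _ ≤ s₂ * ((e 0 ⬝ᵥ P *ᵥ e 0) * Real.exp (-(2 * ρ) * t)) := by gcongr
      _ ≤ s₂ * ((e 0 ⬝ᵥ e 0) / s₁ * Real.exp (-(2 * ρ) * t)) := by
        gcongr
        rw [le_div_iff₀ hs₁, mul_comm]
        exact hPlo (e 0)
      _ = (s₂ / s₁) * Real.exp (-ρ * t) ^ 2 * (e 0 ⬝ᵥ e 0) := by rw [hexp]; ring
  calc eNorm (e t) ≤ Real.sqrt ((s₂ / s₁) * Real.exp (-ρ * t) ^ 2 * (e 0 ⬝ᵥ e 0)) :=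
        Real.sqrt_le_sqrt hsq
    _ = Real.sqrt (s₂ / s₁) * Real.exp (-ρ * t) * eNorm (e 0) := by
        rw [Real.sqrt_mul (by positivity), Real.sqrt_mul (by positivity),
          Real.sqrt_sq (Real.exp_nonneg _)]
        rfl

def IncrSectorBounded (φ : ℝ → ℝ) (α β : ℝ) : Prop :=
  ∀ a b, (φ a - φ b - α * (a - b)) * (φ a - φ b - β * (a - b)) ≤ 0

lemma IncrSectorBounded.dotProduct_nonpos {ι : Type*} [Fintype ι] {φ : ℝ → ℝ} {α β : ℝ}
    (h : IncrSectorBounded φ α β) (u v : ι → ℝ) :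
    (φ ∘ u - φ ∘ v - α • (u - v)) ⬝ᵥ (φ ∘ u - φ ∘ v - β • (u - v)) ≤ 0 :=
  Finset.sum_nonpos fun i _ => h (u i) (v i)

section TwoLayer

variable {ι κ₁ κ₂ ν : Type*} [Fintype ι] [Fintype κ₁] [Fintype κ₂] [Fintype ν]
  [DecidableEq ι] [DecidableEq κ₁] [DecidableEq κ₂]

def twoLayerNet (W1 : Matrix κ₁ ι ℝ) (b1 : κ₁ → ℝ) (φ1 : ℝ → ℝ) (W2 : Matrix κ₂ κ₁ ℝ)
    (b2 : κ₂ → ℝ) (φ2 : ℝ → ℝ) (x : ι → ℝ) : κ₂ → ℝ :=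
  φ2 ∘ (W2 *ᵥ (φ1 ∘ (W1 *ᵥ x + b1)) + b2)

def twoLayerLMI (A : Matrix ι ι ℝ) (g : Matrix ι ν ℝ) (Y : Matrix ν ι ℝ) (W1 : Matrix κ₁ ι ℝ)
    (W2 : Matrix κ₂ κ₁ ℝ) (Wmin : Matrix ι κ₂ ℝ) (S : Matrix ι ι ℝ)
    (α1 β1 α2 β2 lam s₁ μ : ℝ) : Matrix ((ι ⊕ ι) ⊕ (κ₁ ⊕ κ₂)) ((ι ⊕ ι) ⊕ (κ₁ ⊕ κ₂)) ℝ :=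
  fromBlocks
    (fromBlocks (-μ • 1) S S (A * S + S * Aᵀ + g * Y + Yᵀ * gᵀ - (2 * s₁ * lam) • S))
    (fromBlocks 0 0 ((α1 + β1) • (S * W1ᵀ)) Wmin)
    (fromBlocks 0 ((α1 + β1) • (W1 * S)) 0 Wminᵀ)
    (fromBlocks (-(2 * α2 * β2) • (W2ᵀ * W2) - (2 : ℝ) • 1) ((α2 + β2) • W2ᵀ) ((α2 + β2) • W2)
      (-(2 : ℝ) • 1))

lemma dotProduct_twoLayerLMI_mulVec (A : Matrix ι ι ℝ) (g : Matrix ι ν ℝ) (Y : Matrix ν ι ℝ)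
    (W1 : Matrix κ₁ ι ℝ) (W2 : Matrix κ₂ κ₁ ℝ) (Wmin : Matrix ι κ₂ ℝ) {S : Matrix ι ι ℝ}
    (hS : S.IsSymm) (α1 β1 α2 β2 lam s₁ : ℝ) {μ : ℝ} (hμ : μ ≠ 0)
    (Z : ι → ℝ) (Dv : κ₁ → ℝ) (Dw : κ₂ → ℝ) :
    Sum.elim (Sum.elim (μ⁻¹ • S *ᵥ Z) Z) (Sum.elim Dv Dw) ⬝ᵥ
        twoLayerLMI A g Y W1 W2 Wmin S α1 β1 α2 β2 lam s₁ μ *ᵥ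
          Sum.elim (Sum.elim (μ⁻¹ • S *ᵥ Z) Z) (Sum.elim Dv Dw)
      = μ⁻¹ * (S *ᵥ Z ⬝ᵥ S *ᵥ Z) + 2 * (Z ⬝ᵥ (A *ᵥ S *ᵥ Z + g *ᵥ Y *ᵥ Z + Wmin *ᵥ Dw))
        - 2 * s₁ * lam * (Z ⬝ᵥ S *ᵥ Z) + 2 * (α1 + β1) * (W1 *ᵥ S *ᵥ Z ⬝ᵥ Dv) - 2 * (Dv ⬝ᵥ Dv)
        - 2 * α2 * β2 * (W2 *ᵥ Dv ⬝ᵥ W2 *ᵥ Dv) + 2 * (α2 + β2) * (W2 *ᵥ Dv ⬝ᵥ Dw)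
        - 2 * (Dw ⬝ᵥ Dw) := by
  have hSsym : ∀ u v : ι → ℝ, u ⬝ᵥ S *ᵥ v = v ⬝ᵥ S *ᵥ u := fun u v => by
    rw [← dotProduct_transpose_mulVec, hS.eq]
  simp only [twoLayerLMI, fromBlocks_mulVec, sumElim_dotProduct_sumElim, Sum.elim_comp_inl,
    Sum.elim_comp_inr, add_mulVec, sub_mulVec, smul_mulVec, zero_mulVec, one_mulVec, mulVec_smul,
    ← mulVec_mulVec, dotProduct_add, dotProduct_sub, dotProduct_smul, smul_eq_mul, smul_dotProduct,
    dotProduct_zero, add_zero, zero_add, dotProduct_transpose_mulVec]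
  rw [hSsym Z (S *ᵥ Z), hSsym Z (Aᵀ *ᵥ Z), hSsym Z (W1ᵀ *ᵥ Dv), dotProduct_comm (Aᵀ *ᵥ Z),
    dotProduct_transpose_mulVec, dotProduct_comm (W1ᵀ *ᵥ Dv), dotProduct_transpose_mulVec,
    dotProduct_comm (gᵀ *ᵥ Z), dotProduct_transpose_mulVec, dotProduct_comm Dw, dotProduct_comm Dv]
  field_simp
  ring

lemma incremental_lyapunov_decay_of_twoLayerLMI (A : Matrix ι ι ℝ) (g : Matrix ι ν ℝ)
    (Y : Matrix ν ι ℝ) (W1 : Matrix κ₁ ι ℝ) (W2 : Matrix κ₂ κ₁ ℝ) (Wmin : Matrix ι κ₂ ℝ)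
    (b1 : κ₁ → ℝ) (b2 : κ₂ → ℝ)
    {φ1 φ2 : ℝ → ℝ} {α1 β1 α2 β2 lam s₁ μ : ℝ} {S : Matrix ι ι ℝ}
    (hsec1 : IncrSectorBounded φ1 α1 β1) (hsec2 : IncrSectorBounded φ2 α2 β2)
    (hlam : ∀ v, lam * (v ⬝ᵥ v) ≤ v ⬝ᵥ ((α1 * β1) • (W1ᵀ * W1)) *ᵥ v) (hlam0 : 0 ≤ lam)
    (hS : S.PosDef) (hs₁ : 0 < s₁) (hSlo : (S - s₁ • 1).PosSemidef) (hμ : 0 < μ)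
    (hLMI : (-twoLayerLMI A g Y W1 W2 Wmin S α1 β1 α2 β2 lam s₁ μ).PosSemidef) (x y : ι → ℝ) :
    2 * (S⁻¹ *ᵥ (x - y) ⬝ᵥ ((A + g * (Y * S⁻¹)) *ᵥ (x - y) +
        Wmin *ᵥ (twoLayerNet W1 b1 φ1 W2 b2 φ2 x - twoLayerNet W1 b1 φ1 W2 b2 φ2 y)))
      ≤ -(s₁ / μ) * ((x - y) ⬝ᵥ S⁻¹ *ᵥ (x - y)) := by
  have hdet : IsUnit S.det := (isUnit_iff_isUnit_det S).mp hS.isUnit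
  set E := x - y
  set Z := S⁻¹ *ᵥ E
  have hSZ : S *ᵥ Z = E := by rw [mulVec_mulVec, mul_nonsing_inv S hdet, one_mulVec]
  set Dv := φ1 ∘ (W1 *ᵥ x + b1) - φ1 ∘ (W1 *ᵥ y + b1)
  set Dw := twoLayerNet W1 b1 φ1 W2 b2 φ2 x - twoLayerNet W1 b1 φ1 W2 b2 φ2 y
  have h1 := hsec1.dotProduct_nonpos (W1 *ᵥ x + b1) (W1 *ᵥ y + b1)
  rw [add_sub_add_right_eq_sub, ← mulVec_sub] at h1
  change (Dv - α1 • (W1 *ᵥ E)) ⬝ᵥ (Dv - β1 • (W1 *ᵥ E)) ≤ 0 at h1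
  have h2 := hsec2.dotProduct_nonpos (W2 *ᵥ (φ1 ∘ (W1 *ᵥ x + b1)) + b2)
    (W2 *ᵥ (φ1 ∘ (W1 *ᵥ y + b1)) + b2)
  rw [add_sub_add_right_eq_sub, ← mulVec_sub] at h2
  change (Dw - α2 • (W2 *ᵥ Dv)) ⬝ᵥ (Dw - β2 • (W2 *ᵥ Dv)) ≤ 0 at h2
  have hq := dotProduct_mulVec_nonpos_of_posSemidef_neg hLMI
    (Sum.elim (Sum.elim (μ⁻¹ • S *ᵥ Z) Z) (Sum.elim Dv Dw))
  rw [dotProduct_twoLayerLMI_mulVec A g Y W1 W2 Wmin (isHermitian_iff_isSymm.mp hS.1)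
    α1 β1 α2 β2 lam s₁ hμ.ne', hSZ] at hq
  have hspec := hlam E
  have hsv := mul_dotProduct_inv_mulVec_le hdet hs₁.le hSlo E
  rw [smul_mulVec, dotProduct_smul, smul_eq_mul, ← mulVec_mulVec, ← dotProduct_transpose_mulVec,
    transpose_transpose] at hspec
  simp only [sub_dotProduct, dotProduct_sub, smul_dotProduct, dotProduct_smul, smul_eq_mul,
    dotProduct_comm Dv, dotProduct_comm Dw] at h1 h2
  rw [add_mulVec, ← mulVec_mulVec, ← mulVec_mulVec]
  change 2 * (Z ⬝ᵥ (A *ᵥ E + g *ᵥ Y *ᵥ Z + Wmin *ᵥ Dw)) ≤ -(s₁ / μ) * (E ⬝ᵥ Z)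
  change s₁ * (E ⬝ᵥ Z) ≤ E ⬝ᵥ E at hsv
  rw [dotProduct_comm E Z] at hsv ⊢
  rw [div_eq_mul_inv]
  linarith [mul_le_mul_of_nonneg_left hsv hlam0, mul_le_mul_of_nonneg_left hsv (inv_pos.2 hμ).le]

end TwoLayer

/-- two-hidden-layer case: with `H = Y S⁻¹`, the 4×4 block LMI guarantees
contraction of the controlled system
`ẋ = (A + gH) x + W_min Φ²(W² Φ¹(W¹ x + b¹) + b²) + c`. Here `lam` is the minimum
eigenvalue of `α¹β¹ · W¹ᵀW¹`, assumed nonnegative. -/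
theorem controlled_two_layer_contractive_LMI
    (n m₁ m₂ l : ℕ)
    (A : Matrix (Fin n) (Fin n) ℝ)
    (g : Matrix (Fin n) (Fin l) ℝ) (Y : Matrix (Fin l) (Fin n) ℝ)
    (W1 : Matrix (Fin m₁) (Fin n) ℝ) (W2 : Matrix (Fin m₂) (Fin m₁) ℝ)
    (Wmin : Matrix (Fin n) (Fin m₂) ℝ)
    (b1 : Fin m₁ → ℝ) (b2 : Fin m₂ → ℝ) (c : Fin n → ℝ)
    (φ1 φ2 : ℝ → ℝ) (α1 β1 α2 β2 : ℝ)
    (hsec1 : ∀ a d : ℝ,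
      (φ1 a - φ1 d - α1 * (a - d)) * (φ1 a - φ1 d - β1 * (a - d)) ≤ 0)
    (hsec2 : ∀ a d : ℝ,
      (φ2 a - φ2 d - α2 * (a - d)) * (φ2 a - φ2 d - β2 * (a - d)) ≤ 0)
    (hHerm : ((α1 * β1) • (W1ᵀ * W1)).IsHermitian)
    (lam : ℝ) (hlam : IsLeast (Set.range hHerm.eigenvalues) lam) (hlam0 : 0 ≤ lam)
    (S : Matrix (Fin n) (Fin n) ℝ) (hS : S.PosDef)
    (s₁ s₂ μ : ℝ) (hs₁ : 0 < s₁) (hs₁₂ : s₁ ≤ s₂) (hμ : 0 < μ)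
    (hSlo : (S - s₁ • (1 : Matrix (Fin n) (Fin n) ℝ)).PosSemidef)
    (hShi : (s₂ • (1 : Matrix (Fin n) (Fin n) ℝ) - S).PosSemidef)
    (hLMI : (-(Matrix.fromBlocks
        (Matrix.fromBlocks (-μ • (1 : Matrix (Fin n) (Fin n) ℝ)) S
          S (A * S + S * Aᵀ + g * Y + Yᵀ * gᵀ - (2 * s₁ * lam) • S))
        (Matrix.fromBlocks
          (0 : Matrix (Fin n) (Fin m₁) ℝ) (0 : Matrix (Fin n) (Fin m₂) ℝ)
          ((α1 + β1) • (S * W1ᵀ)) Wmin)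
        (Matrix.fromBlocks
          (0 : Matrix (Fin m₁) (Fin n) ℝ) ((α1 + β1) • (W1 * S))
          (0 : Matrix (Fin m₂) (Fin n) ℝ) Wminᵀ)
        (Matrix.fromBlocks
          (-(2 * α2 * β2) • (W2ᵀ * W2) - (2 : ℝ) • (1 : Matrix (Fin m₁) (Fin m₁) ℝ))
          ((α2 + β2) • W2ᵀ)
          ((α2 + β2) • W2)
          (-(2 : ℝ) • (1 : Matrix (Fin m₂) (Fin m₂) ℝ))))).PosSemidef)
    (x₁ x₂ : ℝ → Fin n → ℝ)
    (hx₁ : ∀ t, 0 ≤ t → HasDerivAt x₁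
      ((A + g * (Y * S⁻¹)).mulVec (x₁ t)
        + Wmin.mulVec (fun j =>
            φ2 (W2.mulVec (fun i => φ1 (W1.mulVec (x₁ t) i + b1 i)) j + b2 j)) + c) t)
    (hx₂ : ∀ t, 0 ≤ t → HasDerivAt x₂
      ((A + g * (Y * S⁻¹)).mulVec (x₂ t)
        + Wmin.mulVec (fun j =>
            φ2 (W2.mulVec (fun i => φ1 (W1.mulVec (x₂ t) i + b1 i)) j + b2 j)) + c) t) :
    ∀ t, 0 ≤ t →
      eNorm (x₁ t - x₂ t) ≤
        Real.sqrt (s₂ / s₁) * Real.exp (-(s₁ / (2 * μ)) * t) * eNorm (x₁ 0 - x₂ 0) := by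
  intro t ht
  have hSinv : S⁻¹.IsSymm := by
    rw [IsSymm, transpose_nonsing_inv, (isHermitian_iff_isSymm.mp hS.1).eq]
  have hspec (v : Fin n → ℝ) := hHerm.mul_dotProduct_self_le (fun i => hlam.2 ⟨i, rfl⟩) v
  have hrate : 2 * (s₁ / (2 * μ)) = s₁ / μ := by field_simp
  refine eNorm_sub_le_of_contracting (f := fun x => (A + g * (Y * S⁻¹)) *ᵥ x +
      Wmin *ᵥ twoLayerNet W1 b1 φ1 W2 b2 φ2 x + c) hSinv hs₁ (hs₁.le.trans hs₁₂)
    (mul_dotProduct_inv_mulVec_le ((isUnit_iff_isUnit_det S).mp hS.isUnit) hs₁.le hSlo)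
    (dotProduct_le_mul_dotProduct_inv_mulVec hS hShi) (fun x y => ?_) hx₁ hx₂ ht
  rw [hrate, add_sub_add_right_eq_sub, add_sub_add_comm, ← mulVec_sub, ← mulVec_sub]
  exact incremental_lyapunov_decay_of_twoLayerLMI A g Y W1 W2 Wmin b1 b2 hsec1 hsec2 hspec hlam0
    hS hs₁ hSlo hμ hLMI x y
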